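/- Let g₁₉⁻ be the Lie algebra with complex structure equations dω¹ = 0, dω² = ω^{13} + ω^{1 3̄}, dω³ = i(ω^{1 2̄} − ω^{2 1̄}) (Family III with ε = 0, sign +). Then the Bott-Chern cohomology group H^{1,1}_BC(g₁₉⁻) is 2-dimensional, spanned by the classes of ω^{1 1̄} and ω^{1 2̄} − ω^{2 1̄}. -/

import Mathlib

/-!
Since `∂∂̄` vanishes on constants, `H^{1,1}_BC` is the space of closed `(1,1)`-forms. Applying the
Leibniz rule to a general `(1,1)`-form `∑ a_{ij} ω^{i j̄}` and sorting the resulting 3-forms into the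
monomial basis of the exterior algebra, `d` vanishes exactly when
`a_{13̄} = a_{23̄} = a_{31̄} = a_{32̄} = a_{22̄} = a_{33̄} = 0` and `a_{21̄} = -a_{12̄}`;
the coefficients `a_{11̄}` and `a_{12̄}` remain free.
-/

noncomputable section

open Submodule LinearMap

abbrev E : Type := ExteriorAlgebra ℂ (Fin 6 → ℂ)

def ω (i : Fin 3) : E := ExteriorAlgebra.ι ℂ (Pi.single (⟨i.1, by omega⟩ : Fin 6) (1 : ℂ))
def ωb (i : Fin 3) : E := ExteriorAlgebra.ι ℂ (Pi.single (⟨i.1 + 3, by omega⟩ : Fin 6) (1 : ℂ))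

def IsAntider (d : E →ₗ[ℂ] E) : Prop :=
  d 1 = 0 ∧ ∀ (v : Fin 6 → ℂ) (y : E),
    d (ExteriorAlgebra.ι ℂ v * y) =
      d (ExteriorAlgebra.ι ℂ v) * y - ExteriorAlgebra.ι ℂ v * d y

def Lam11 : Submodule ℂ E := span ℂ (Set.range fun p : Fin 3 × Fin 3 => ω p.1 * ωb p.2)

namespace ExteriorAlgebra

variable {R M : Type*} [CommRing R] [AddCommGroup M] [Module R M]

theorem ι_mul_ι_swap (x y : M) : ι R x * ι R y = -(ι R y * ι R x) :=
  eq_neg_of_add_eq_zero_left (ι_add_mul_swap x y)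

theorem ι_mul_ι_mul_swap (x y : M) (z : ExteriorAlgebra R M) :
    ι R x * (ι R y * z) = -(ι R y * (ι R x * z)) := by
  rw [← mul_assoc, ι_mul_ι_swap, neg_mul, mul_assoc]

theorem ι_mul_ι_mul_self (x : M) (z : ExteriorAlgebra R M) : ι R x * (ι R x * z) = 0 := by
  rw [← mul_assoc, ι_sq_zero, zero_mul]

theorem basis_image_of_strictMono {I : Type*} [LinearOrder I] (b : Module.Basis I R M) {n : ℕ}
    {t : Fin n → I} (ht : StrictMono t) :
    b.ExteriorAlgebra (Finset.univ.image t) = ιMulti R n (b ∘ t) := by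
  have hcard : (Finset.univ.image t).card = n := by
    rw [Finset.card_image_of_injective _ ht.injective, Finset.card_univ, Fintype.card_fin]
  rw [basis_apply_ofCard b hcard]
  exact congrArg (fun f => ιMulti R n (b ∘ f))
    (Finset.orderEmbOfFin_unique hcard (by simp) ht).symm

end ExteriorAlgebra

def e (i : Fin 6) : E := ExteriorAlgebra.ι ℂ (Pi.single i 1)

theorem ω_zero : ω 0 = e 0 := rfl
theorem ω_one : ω 1 = e 1 := rfl
theorem ω_two : ω 2 = e 2 := rfl
theorem ωb_zero : ωb 0 = e 3 := rfl
theorem ωb_one : ωb 1 = e 4 := rfl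
theorem ωb_two : ωb 2 = e 5 := rfl

theorem e_mul_self (i : Fin 6) : e i * e i = 0 := ExteriorAlgebra.ι_sq_zero _

theorem e_mul_e_mul_self (i : Fin 6) (z : E) : e i * (e i * z) = 0 :=
  ExteriorAlgebra.ι_mul_ι_mul_self _ _

theorem e_mul_e_of_lt {i j : Fin 6} (_ : j < i) : e i * e j = -(e j * e i) :=
  ExteriorAlgebra.ι_mul_ι_swap _ _

theorem e_mul_e_mul_of_lt {i j : Fin 6} (_ : j < i) (z : E) :
    e i * (e j * z) = -(e j * (e i * z)) :=
  ExteriorAlgebra.ι_mul_ι_mul_swap _ _ _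

abbrev wedgeBasis : Module.Basis (Finset (Fin 6)) ℂ E := (Pi.basisFun ℂ (Fin 6)).ExteriorAlgebra

theorem wedgeBasis_pair {i j : Fin 6} (hij : i < j) : wedgeBasis {i, j} = e i * e j := by
  have ht : StrictMono ![i, j] := by
    intro a b hab
    fin_cases a <;> fin_cases b <;> simp_all
  convert ExteriorAlgebra.basis_image_of_strictMono (Pi.basisFun ℂ (Fin 6)) ht using 2
  · ext
    simp only [Finset.mem_insert, Finset.mem_singleton, Finset.mem_image, Finset.mem_univ,
      true_and, Fin.exists_fin_two, Matrix.cons_val_zero, Matrix.cons_val_one]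
    tauto
  · simp [ExteriorAlgebra.ιMulti_apply, e, Matrix.vecTail]

theorem wedgeBasis_triple {i j k : Fin 6} (hij : i < j) (hjk : j < k) :
    wedgeBasis {i, j, k} = e i * (e j * e k) := by
  have ht : StrictMono ![i, j, k] := by
    intro a b hab
    fin_cases a <;> fin_cases b <;> simp_all
    exact hij.trans hjk
  convert ExteriorAlgebra.basis_image_of_strictMono (Pi.basisFun ℂ (Fin 6)) ht using 2
  · ext
    simp only [Finset.mem_insert, Finset.mem_singleton, Finset.mem_image, Finset.mem_univ,
      true_and, Fin.exists_fin_succ, Matrix.cons_val_zero, Matrix.cons_val_succ,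
      Matrix.cons_val_fin_one, exists_const]
    tauto
  · simp [ExteriorAlgebra.ιMulti_apply, e, Matrix.vecTail]

def form11 (a : Fin 3 × Fin 3 → ℂ) : E := ∑ p, a p • (ω p.1 * ωb p.2)

theorem mem_Lam11_iff {x : E} : x ∈ Lam11 ↔ ∃ a, form11 a = x :=
  mem_span_range_iff_exists_fun ℂ

structure SatisfiesStructureEqns (d : E →ₗ[ℂ] E) : Prop where
  isAntider : IsAntider d
  d_ω_zero : d (ω 0) = 0
  d_ω_one : d (ω 1) = ω 0 * ω 2 + ω 0 * ωb 2
  d_ω_two : d (ω 2) = Complex.I • (ω 0 * ωb 1) - Complex.I • (ω 1 * ωb 0)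
  d_ωb_zero : d (ωb 0) = 0
  d_ωb_one : d (ωb 1) = ωb 0 * ωb 2 + ωb 0 * ω 2
  d_ωb_two : d (ωb 2) = -(Complex.I) • (ωb 0 * ω 1) + Complex.I • (ωb 1 * ω 0)

namespace SatisfiesStructureEqns

open Complex

variable {d : E →ₗ[ℂ] E}

theorem map_form11 (hS : SatisfiesStructureEqns d) (a : Fin 3 × Fin 3 → ℂ) :
    d (form11 a) =
      (-I * a (0, 2)) • (e 0 * (e 1 * e 3)) + (-I * a (1, 2)) • (e 0 * (e 1 * e 4))
      + (a (0, 1) + a (1, 0)) • (e 0 * (e 2 * e 3)) + (a (1, 1) - I * a (2, 2)) • (e 0 * (e 2 * e 4))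
      + a (1, 2) • (e 0 * (e 2 * e 5)) + (-I * a (2, 0)) • (e 0 * (e 3 * e 4))
      - (a (0, 1) + a (1, 0)) • (e 0 * (e 3 * e 5)) - (a (1, 1) - I * a (2, 2)) • (e 0 * (e 4 * e 5))
      + (a (1, 1) + I * a (2, 2)) • (e 1 * (e 2 * e 3)) + (-I * a (2, 1)) • (e 1 * (e 3 * e 4))
      - (a (1, 1) + I * a (2, 2)) • (e 1 * (e 3 * e 5)) - a (2, 1) • (e 2 * (e 3 * e 5)) := by
  have leibniz (i j : Fin 3) : d (ω i * ωb j) = d (ω i) * ωb j - ω i * d (ωb j) :=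
    hS.isAntider.2 _ _
  simp only [form11, Fintype.sum_prod_type, Fin.sum_univ_three, map_add, map_smul, leibniz,
    hS.d_ω_zero, hS.d_ω_one, hS.d_ω_two, hS.d_ωb_zero, hS.d_ωb_one, hS.d_ωb_two]
  -- sort every monomial into increasing order; the order hypotheses of `e_mul_e_of_lt` and
  -- `e_mul_e_mul_of_lt` are what make this rewriting terminate
  simp (disch := decide) only [ω_zero, ω_one, ω_two, ωb_zero, ωb_one, ωb_two, mul_add, add_mul,
    sub_mul, mul_assoc, mul_neg, neg_mul, mul_smul_comm, smul_mul_assoc, neg_neg, mul_zero,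
    zero_mul, e_mul_self, e_mul_e_mul_self, e_mul_e_of_lt, e_mul_e_mul_of_lt]
  module

theorem map_form11_eq_zero_iff (hS : SatisfiesStructureEqns d) (a : Fin 3 × Fin 3 → ℂ) :
    d (form11 a) = 0 ↔
      a (0, 2) = 0 ∧ a (1, 2) = 0 ∧ a (2, 0) = 0 ∧ a (2, 1) = 0 ∧ a (1, 1) = 0 ∧ a (2, 2) = 0 ∧
        a (1, 0) = -a (0, 1) := by
  rw [hS.map_form11]
  constructor
  · intro h
    simp (disch := decide) only [← wedgeBasis_triple] at h
    have coeff (s : Finset (Fin 6)) := congrArg (wedgeBasis.coord s) h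
    have c013 := coeff {0, 1, 3}
    have c014 := coeff {0, 1, 4}
    have c023 := coeff {0, 2, 3}
    have c024 := coeff {0, 2, 4}
    have c034 := coeff {0, 3, 4}
    have c123 := coeff {1, 2, 3}
    have c134 := coeff {1, 3, 4}
    simp +decide only [map_add, map_sub, map_smul, map_zero, Module.Basis.coord_apply,
      Module.Basis.repr_self, Finsupp.single_apply, smul_eq_mul, mul_one, mul_zero, add_zero,
      zero_add, sub_zero, if_true, if_false, mul_eq_zero, neg_eq_zero, I_ne_zero, false_or]
      at c013 c014 c023 c024 c034 c123 c134
    refine ⟨c013, c014, c034, c134, ?_, ?_, by linear_combination c023⟩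
    · linear_combination (c024 + c123) / 2
    · linear_combination (-I / 2) * (c123 - c024) + a (2, 2) * I_sq
  · rintro ⟨h02, h12, h20, h21, h11, h22, h10⟩
    simp [h02, h12, h20, h21, h11, h22, h10]

theorem Lam11_inf_ker (hS : SatisfiesStructureEqns d) :
    Lam11 ⊓ ker d = span ℂ {ω 0 * ωb 0, ω 0 * ωb 1 - ω 1 * ωb 0} := by
  ext x
  simp only [Submodule.mem_inf, mem_Lam11_iff, mem_ker, mem_span_pair]
  constructor
  · rintro ⟨⟨a, rfl⟩, hx⟩
    obtain ⟨h02, h12, h20, h21, h11, h22, h10⟩ := (hS.map_form11_eq_zero_iff a).1 hx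
    refine ⟨a (0, 0), a (0, 1), ?_⟩
    simp only [form11, Fintype.sum_prod_type, Fin.sum_univ_three, h02, h12, h20, h21, h11, h22,
      h10]
    module
  · rintro ⟨c₁, c₂, rfl⟩
    set a : Fin 3 × Fin 3 → ℂ := fun p => ![![c₁, c₂, 0], ![-c₂, 0, 0], ![0, 0, 0]] p.1 p.2
    have hx : form11 a = c₁ • (ω 0 * ωb 0) + c₂ • (ω 0 * ωb 1 - ω 1 * ωb 0) := by
      simp only [form11, a, Fintype.sum_prod_type, Fin.sum_univ_three, Matrix.cons_val_zero,
        Matrix.cons_val_one, Matrix.cons_val, zero_smul, add_zero]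
      module
    refine ⟨⟨a, hx⟩, ?_⟩
    rw [← hx, hS.map_form11_eq_zero_iff]
    simp [a]

end SatisfiesStructureEqns

theorem finrank_span_closed_generators :
    Module.finrank ℂ (span ℂ {ω 0 * ωb 0, ω 0 * ωb 1 - ω 1 * ωb 0}) = 2 := by
  have hB : ω 0 * ωb 0 = wedgeBasis {0, 3} ∧
      ω 0 * ωb 1 - ω 1 * ωb 0 = wedgeBasis {0, 4} - wedgeBasis {1, 3} := by
    simp (disch := decide) only [ω_zero, ω_one, ωb_zero, ωb_one, wedgeBasis_pair, and_self]
  have hli : LinearIndependent ℂ ![ω 0 * ωb 0, ω 0 * ωb 1 - ω 1 * ωb 0] := by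
    rw [LinearIndependent.pair_iff, hB.1, hB.2]
    intro s t hst
    have h03 := congrArg (wedgeBasis.coord {0, 3}) hst
    have h04 := congrArg (wedgeBasis.coord {0, 4}) hst
    simp +decide only [map_add, map_sub, map_smul, map_zero, Module.Basis.coord_apply,
      Module.Basis.repr_self, Finsupp.single_apply, smul_eq_mul, mul_one, mul_zero, add_zero,
      zero_add, sub_zero, if_true, if_false] at h03 h04
    exact ⟨h03, h04⟩
  rw [← Matrix.range_cons_cons_empty, finrank_span_eq_card hli, Fintype.card_fin]

theorem bott_chern_11_h19minus
    (d : E →ₗ[ℂ] E) (hd : IsAntider d)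
    (h1 : d (ω 0) = 0)
    (h2 : d (ω 1) = ω 0 * ω 2 + ω 0 * ωb 2)
    (h3 : d (ω 2) = Complex.I • (ω 0 * ωb 1) - Complex.I • (ω 1 * ωb 0))
    (h1c : d (ωb 0) = 0)
    (h2c : d (ωb 1) = ωb 0 * ωb 2 + ωb 0 * ω 2)
    (h3c : d (ωb 2) = -(Complex.I) • (ωb 0 * ω 1) + Complex.I • (ωb 1 * ω 0)) :
    Lam11 ⊓ ker d = span ℂ {ω 0 * ωb 0, ω 0 * ωb 1 - ω 1 * ωb 0} ∧
      Module.finrank ℂ ↥(Lam11 ⊓ ker d) = 2 := by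
  have hker := SatisfiesStructureEqns.Lam11_inf_ker ⟨hd, h1, h2, h3, h1c, h2c, h3c⟩
  exact ⟨hker, hker ▸ finrank_span_closed_generators⟩

end
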